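/- arXiv:1912.10480 — 7 statements merged into one kernel-verified Lean document; each statement's English description precedes it below -/
import Mathlib

section
/- Let H and K be real Hilbert spaces, T : H → K a nonzero bounded linear operator with closed range and Moore–Penrose inverse T†, b ∈ K, and P : K → K a firmly nonexpansive map, i.e., ‖P u − P v‖²_K ≤ ⟨u − v, P u − P v⟩_K for all u, v ∈ K. Then the map A : H → H defined by A x := T†(P(T x + b)) is firmly nonexpansive with respect to the T-inner product: ‖A x − A y‖²_T ≤ ⟨x − y, A x − A y⟩_T for all x, y ∈ H. -/
/-!
With `w = P (T x + b) - P (T y + b)` we have `A x - A y = T† w`. The range of `T†` is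
orthogonal to `ker T`, so the `P_N`-terms vanish. `T T†` is an orthogonal projection fixing
`range T`, so `‖T T† w‖² ≤ ‖w‖² ≤ ⟪T (x - y), w⟫ = ⟪T (x - y), T T† w⟫`, the middle step being
firm nonexpansiveness of `P`.
-/

open RealInnerProductSpace ContinuousLinearMap

section MoorePenrose

variable {𝕜 E F : Type*} [RCLike 𝕜]
  [NormedAddCommGroup E] [InnerProductSpace 𝕜 E] [NormedAddCommGroup F] [InnerProductSpace 𝕜 F]

theorem ContinuousLinearMap.isStarProjection_comp_of_comp_comp_eq [CompleteSpace F]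
    {T : E →L[𝕜] F} {S : F →L[𝕜] E} (hTST : T ∘L S ∘L T = T) (hTS : IsSelfAdjoint (T ∘L S)) :
    IsStarProjection (T ∘L S) :=
  ⟨by rw [IsIdempotentElem, mul_def, ← comp_assoc, comp_assoc T S T, hTST], hTS⟩

theorem IsStarProjection.norm_apply_le [CompleteSpace F] {Q : F →L[𝕜] F}
    (hQ : IsStarProjection Q) (w : F) : ‖Q w‖ ≤ ‖w‖ :=
  (Q.le_opNorm w).trans <| mul_le_of_le_one_left (norm_nonneg w) (hQ.norm_le Q)

theorem ContinuousLinearMap.inner_apply_apply_apply_of_comp_comp_eq [CompleteSpace F]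
    {T : E →L[𝕜] F} {S : F →L[𝕜] E} (hTST : T ∘L S ∘L T = T) (hTS : IsSelfAdjoint (T ∘L S))
    (z : E) (w : F) :
    inner 𝕜 (T z) (T (S w)) = inner 𝕜 (T z) w := by
  have hproj : (T ∘L S) (T z) = T z := congr($hTST z)
  calc inner 𝕜 (T z) (T (S w)) = inner 𝕜 ((T ∘L S) (T z)) w := (hTS.isSymmetric _ _).symm
    _ = inner 𝕜 (T z) w := by rw [hproj]

theorem ContinuousLinearMap.apply_mem_orthogonal_ker [CompleteSpace E]
    {T : E →L[𝕜] F} {S : F →L[𝕜] E} (hSTS : S ∘L T ∘L S = S) (hST : IsSelfAdjoint (S ∘L T))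
    (w : F) :
    S w ∈ (T.ker : Submodule 𝕜 E)ᗮ := by
  refine (Submodule.mem_orthogonal' _ _).2 fun g hg ↦ ?_
  have hTg : T g = 0 := hg
  rw [← S.inner_apply_apply_apply_of_comp_comp_eq hSTS hST, hTg, map_zero, inner_zero_right]

theorem Submodule.eq_zero_of_mem_orthogonal_of_isProjection {U : Submodule 𝕜 E} {p : E → E}
    (hp_mem : ∀ x, p x ∈ U) (hp_orth : ∀ x, x - p x ∈ Uᗮ) {v : E} (hv : v ∈ Uᗮ) : p v = 0 := by
  have hpv : p v ∈ Uᗮ := by simpa using Uᗮ.sub_mem hv (hp_orth v)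
  exact inner_self_eq_zero.1 (Submodule.inner_right_of_mem_orthogonal (hp_mem v) hpv)

end MoorePenrose

theorem prox_affine_composition_firmly_nonexpansive_general
    {H K : Type*} [NormedAddCommGroup H] [InnerProductSpace ℝ H] [CompleteSpace H]
    [NormedAddCommGroup K] [InnerProductSpace ℝ K] [CompleteSpace K]
    (T : H →L[ℝ] K)
    -- `Td` is the Moore–Penrose inverse of `T`:
    (Td : K →L[ℝ] H)
    (hMP1 : T ∘L Td ∘L T = T) (hMP2 : Td ∘L T ∘L Td = Td)
    (hMP3 : IsSelfAdjoint (T ∘L Td)) (hMP4 : IsSelfAdjoint (Td ∘L T))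
    -- `PN` is the orthogonal projection onto `ker T`:
    (PN : H →L[ℝ] H)
    (hPN_mem : ∀ x : H, T (PN x) = 0)
    (hPN_orth : ∀ x y : H, T y = 0 → ⟪x - PN x, y⟫ = 0)
    (b : K) (P : K → K)
    (hP : ∀ u v : K, ‖P u - P v‖ ^ 2 ≤ ⟪u - v, P u - P v⟫)
    (A : H → H) (hA : ∀ x : H, A x = Td (P (T x + b))) :
    ∀ x y : H,
      ‖T (A x - A y)‖ ^ 2 / ‖T‖ ^ 2 + ‖PN (A x - A y)‖ ^ 2 ≤
        ⟪T (x - y), T (A x - A y)⟫ / ‖T‖ ^ 2 + ⟪x - y, PN (A x - A y)⟫ := by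
  intro x y
  set w := P (T x + b) - P (T y + b)
  have hAxy : A x - A y = Td w := by rw [hA, hA, map_sub]
  have hker : PN (Td w) = 0 :=
    Submodule.eq_zero_of_mem_orthogonal_of_isProjection (U := T.ker) (p := PN) hPN_mem
      (fun x ↦ (Submodule.mem_orthogonal' _ _).2 fun y ↦ hPN_orth x y)
      (apply_mem_orthogonal_ker hMP2 hMP4 w)
  have hfirm : ‖w‖ ^ 2 ≤ ⟪T (x - y), w⟫ := by
    simpa [map_sub] using hP (T x + b) (T y + b)
  rw [hAxy, hker, norm_zero, inner_zero_right, zero_pow two_ne_zero, add_zero, add_zero]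
  gcongr
  calc ‖T (Td w)‖ ^ 2 ≤ ‖w‖ ^ 2 := by
        gcongr
        exact (isStarProjection_comp_of_comp_comp_eq hMP1 hMP3).norm_apply_le w
    _ ≤ ⟪T (x - y), w⟫ := hfirm
    _ = ⟪T (x - y), T (Td w)⟫ := (T.inner_apply_apply_apply_of_comp_comp_eq hMP1 hMP3 _ _).symm

/-- Let `H, K` be real Hilbert spaces, `T : H → K` a nonzero bounded linear
operator with closed range and Moore–Penrose inverse `T†`, `b ∈ K`, and `P : K → K` firmly
nonexpansive. Then `A x := T†(P(T x + b))` is firmly nonexpansive with respect to the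
`T`-inner product `⟨u, v⟩_T = ⟨Tu, Tv⟩/‖T‖² + ⟨u, P_N v⟩` (with `P_N` the orthogonal
projection onto `ker T`): `‖Ax − Ay‖²_T ≤ ⟨x − y, Ax − Ay⟩_T` for all `x, y ∈ H`. -/
theorem prox_affine_composition_firmly_nonexpansive
    {H K : Type*} [NormedAddCommGroup H] [InnerProductSpace ℝ H] [CompleteSpace H]
    [NormedAddCommGroup K] [InnerProductSpace ℝ K] [CompleteSpace K]
    (T : H →L[ℝ] K) (hT : T ≠ 0) (hRange : IsClosed (LinearMap.range (T : H →ₗ[ℝ] K) : Set K))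
    -- `Td` is the Moore–Penrose inverse of `T`:
    (Td : K →L[ℝ] H)
    (hMP1 : T ∘L Td ∘L T = T) (hMP2 : Td ∘L T ∘L Td = Td)
    (hMP3 : IsSelfAdjoint (T ∘L Td)) (hMP4 : IsSelfAdjoint (Td ∘L T))
    -- `PN` is the orthogonal projection onto `ker T`:
    (PN : H →L[ℝ] H)
    (hPN_mem : ∀ x : H, T (PN x) = 0)
    (hPN_fix : ∀ x : H, T x = 0 → PN x = x)
    (hPN_orth : ∀ x y : H, T y = 0 → ⟪x - PN x, y⟫ = 0)
    (b : K) (P : K → K)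
    (hP : ∀ u v : K, ‖P u - P v‖ ^ 2 ≤ ⟪u - v, P u - P v⟫)
    (A : H → H) (hA : ∀ x : H, A x = Td (P (T x + b))) :
    ∀ x y : H,
      ‖T (A x - A y)‖ ^ 2 / ‖T‖ ^ 2 + ‖PN (A x - A y)‖ ^ 2 ≤
        ⟪T (x - y), T (A x - A y)⟫ / ‖T‖ ^ 2 + ⟪x - y, PN (A x - A y)⟫ :=
  prox_affine_composition_firmly_nonexpansive_general T Td hMP1 hMP2 hMP3 hMP4 PN hPN_mem hPN_orth b
    P hP A hA
end

section
/- Let H and K be real Hilbert spaces and T : H → K a nonzero bounded linear operator with closed range and Moore–Penrose inverse T†. Then for all x ∈ H one has ‖x‖²_T ≤ 2‖x‖²_H and ‖x‖²_H ≤ (‖T†‖²‖T‖² + 1)‖x‖²_T, where ‖T‖ and ‖T†‖ denote operator norms; in particular the norms ‖·‖_H and ‖·‖_T are equivalent on H. -/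
/-!
Write `x = (x - P_N x) + P_N x`, an orthogonal decomposition. Then `‖P_N x‖ ≤ ‖x‖` and
`‖T x‖ ≤ ‖T‖ ‖x‖` give the first bound. For the second, `x - P_N x` and `T† T x` are both
orthogonal to `ker T` (the latter because `T† T` is self-adjoint) and have the same image
under `T` (because `T T† T = T`), so they coincide; hence `‖x - P_N x‖ ≤ ‖T†‖ ‖T x‖`.
-/

open RealInnerProductSpace ContinuousLinearMap

section

variable {H K : Type*} [NormedAddCommGroup H] [InnerProductSpace ℝ H]
  [NormedAddCommGroup K] [InnerProductSpace ℝ K]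

theorem eq_of_map_eq_of_inner_ker_eq_zero (T : H →L[ℝ] K) {u v : H}
    (hu : ∀ y, T y = 0 → ⟪u, y⟫ = 0) (hv : ∀ y, T y = 0 → ⟪v, y⟫ = 0) (huv : T u = T v) :
    u = v := by
  have hker : T (u - v) = 0 := by rw [map_sub, huv, sub_self]
  have hself : ⟪u - v, u - v⟫ = 0 := by
    rw [inner_sub_left, hu _ hker, hv _ hker, sub_self]
  exact sub_eq_zero.mp (inner_self_eq_zero.mp hself)

theorem inner_comp_apply_eq_zero_of_isSelfAdjoint [CompleteSpace H] {T : H →L[ℝ] K}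
    {S : K →L[ℝ] H} (hST : IsSelfAdjoint (S ∘L T)) (x : H) {y : H} (hy : T y = 0) :
    ⟪S (T x), y⟫ = 0 := by
  have h := hST.isSymmetric x y
  simp only [coe_coe, comp_apply] at h
  rw [h, hy, map_zero, inner_zero_right]

theorem norm_sq_eq_norm_sub_sq_add_norm_sq {x p : H} (h : ⟪x - p, p⟫ = 0) :
    ‖x‖ ^ 2 = ‖x - p‖ ^ 2 + ‖p‖ ^ 2 := by
  simpa [h] using norm_add_sq_real (x - p) p

theorem sq_norm_apply_div_sq_opNorm_le (T : H →L[ℝ] K) (x : H) :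
    ‖T x‖ ^ 2 / ‖T‖ ^ 2 ≤ ‖x‖ ^ 2 :=
  div_le_of_le_mul₀ (sq_nonneg _) (sq_nonneg _) <| by
    rw [← mul_pow, mul_comm]
    exact pow_le_pow_left₀ (norm_nonneg _) (T.le_opNorm x) 2

/-- The quotient by `‖T‖ ^ 2` is harmless even when `T = 0`, since then `T x = 0`. -/
theorem sq_norm_apply_eq_sq_opNorm_mul_div (T : H →L[ℝ] K) (x : H) :
    ‖T x‖ ^ 2 = ‖T‖ ^ 2 * (‖T x‖ ^ 2 / ‖T‖ ^ 2) := by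
  rcases eq_or_ne ‖T‖ 0 with hT | hT
  · simp [norm_eq_zero.mp hT]
  · field_simp

theorem sq_norm_comp_apply_le (S : K →L[ℝ] H) (T : H →L[ℝ] K) (x : H) :
    ‖S (T x)‖ ^ 2 ≤ ‖S‖ ^ 2 * ‖T‖ ^ 2 * (‖T x‖ ^ 2 / ‖T‖ ^ 2) :=
  calc ‖S (T x)‖ ^ 2 ≤ (‖S‖ * ‖T x‖) ^ 2 := pow_le_pow_left₀ (norm_nonneg _) (S.le_opNorm _) 2
    _ = ‖S‖ ^ 2 * ‖T‖ ^ 2 * (‖T x‖ ^ 2 / ‖T‖ ^ 2) := by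
      rw [mul_pow, mul_assoc, ← sq_norm_apply_eq_sq_opNorm_mul_div]

end

theorem T_norm_equivalence_general
    {H K : Type*} [NormedAddCommGroup H] [InnerProductSpace ℝ H] [CompleteSpace H]
    [NormedAddCommGroup K] [InnerProductSpace ℝ K]
    (T : H →L[ℝ] K)
    -- `Td` is the Moore–Penrose inverse of `T`:
    (Td : K →L[ℝ] H)
    (hMP1 : T ∘L Td ∘L T = T)
    (hMP4 : IsSelfAdjoint (Td ∘L T))
    -- `PN` is the orthogonal projection onto `ker T`:
    (PN : H →L[ℝ] H)
    (hPN_mem : ∀ x : H, T (PN x) = 0)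
    (hPN_orth : ∀ x y : H, T y = 0 → ⟪x - PN x, y⟫ = 0) :
    ∀ x : H,
      ‖T x‖ ^ 2 / ‖T‖ ^ 2 + ‖PN x‖ ^ 2 ≤ 2 * ‖x‖ ^ 2 ∧
      ‖x‖ ^ 2 ≤ (‖Td‖ ^ 2 * ‖T‖ ^ 2 + 1) * (‖T x‖ ^ 2 / ‖T‖ ^ 2 + ‖PN x‖ ^ 2) := by
  intro x
  have hrange : x - PN x = Td (T x) := by
    refine eq_of_map_eq_of_inner_ker_eq_zero T (hPN_orth x)
      (fun y hy ↦ inner_comp_apply_eq_zero_of_isSelfAdjoint hMP4 x hy) ?_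
    rw [map_sub, hPN_mem, sub_zero]
    exact (congrArg (· x) hMP1).symm
  have hpyth := norm_sq_eq_norm_sub_sq_add_norm_sq (hPN_orth x (PN x) (hPN_mem x))
  have hTx := sq_norm_apply_div_sq_opNorm_le T x
  have hTdTx := sq_norm_comp_apply_le Td T x
  rw [← hrange] at hTdTx
  have hcoef : 0 ≤ ‖Td‖ ^ 2 * ‖T‖ ^ 2 * ‖PN x‖ ^ 2 := by positivity
  have hquot : 0 ≤ ‖T x‖ ^ 2 / ‖T‖ ^ 2 := by positivity
  constructor
  · linarith [sq_nonneg ‖x - PN x‖]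
  · linarith

/-- Let `H, K` be real Hilbert spaces and `T : H → K` a nonzero bounded linear
operator with closed range and Moore–Penrose inverse `T†`. Then for all `x ∈ H`,
`‖x‖²_T ≤ 2‖x‖²_H` and `‖x‖²_H ≤ (‖T†‖²‖T‖² + 1)‖x‖²_T`, where
`‖x‖²_T = ‖Tx‖²/‖T‖² + ‖P_N x‖²` with `P_N` the orthogonal projection onto `ker T`;
in particular, the norms `‖·‖_H` and `‖·‖_T` are equivalent on `H`. -/
theorem T_norm_equivalence
    {H K : Type*} [NormedAddCommGroup H] [InnerProductSpace ℝ H] [CompleteSpace H]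
    [NormedAddCommGroup K] [InnerProductSpace ℝ K] [CompleteSpace K]
    (T : H →L[ℝ] K) (hT : T ≠ 0) (hRange : IsClosed (LinearMap.range (T : H →ₗ[ℝ] K) : Set K))
    -- `Td` is the Moore–Penrose inverse of `T`:
    (Td : K →L[ℝ] H)
    (hMP1 : T ∘L Td ∘L T = T) (hMP2 : Td ∘L T ∘L Td = Td)
    (hMP3 : IsSelfAdjoint (T ∘L Td)) (hMP4 : IsSelfAdjoint (Td ∘L T))
    -- `PN` is the orthogonal projection onto `ker T`:
    (PN : H →L[ℝ] H)
    (hPN_mem : ∀ x : H, T (PN x) = 0)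
    (hPN_fix : ∀ x : H, T x = 0 → PN x = x)
    (hPN_orth : ∀ x y : H, T y = 0 → ⟪x - PN x, y⟫ = 0) :
    ∀ x : H,
      ‖T x‖ ^ 2 / ‖T‖ ^ 2 + ‖PN x‖ ^ 2 ≤ 2 * ‖x‖ ^ 2 ∧
      ‖x‖ ^ 2 ≤ (‖Td‖ ^ 2 * ‖T‖ ^ 2 + 1) * (‖T x‖ ^ 2 / ‖T‖ ^ 2 + ‖PN x‖ ^ 2) :=
  T_norm_equivalence_general T Td hMP1 hMP4 PN hPN_mem hPN_orth
end

section
/- Let H be a real Hilbert space and ℓ² the Hilbert space of square-summable real sequences indexed by ℕ with canonical unit vectors (δ_k)_{k∈ℕ}. A bounded linear operator T : ℓ² → H is surjective if and only if the sequence (T δ_k)_{k∈ℕ} is a frame of H, i.e., there exist constants 0 < A ≤ B < ∞ such that A‖x‖²_H ≤ Σ_{k∈ℕ} ⟨x, T δ_k⟩²_H ≤ B‖x‖²_H for all x ∈ H. -/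
/-!
The frame sum at `x` is `‖T† x‖ ^ 2`, because `T† x` is the coefficient sequence
`k ↦ ⟪x, T δ_k⟫`. So the upper frame bound always holds, and the lower one says that `T†` is
bounded below. A surjective `T` has this property by the open mapping theorem. Conversely, if
`T†` is bounded below then the form `⟪T T† y, y⟫ = ‖T† y‖ ^ 2` is coercive, so `T T†` is onto by
Lax–Milgram, and hence so is `T`.
-/

open RealInnerProductSpace
open scoped InnerProduct

namespace ContinuousLinearMap

variable {E F : Type*} [NormedAddCommGroup E] [InnerProductSpace ℝ E] [CompleteSpace E]
  [NormedAddCommGroup F] [InnerProductSpace ℝ F] [CompleteSpace F]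

theorem exists_mul_norm_le_norm_adjoint_apply_of_surjective {T : E →L[ℝ] F}
    (hT : Function.Surjective T) : ∃ c > 0, ∀ y, c * ‖y‖ ≤ ‖(T†) y‖ := by
  obtain ⟨C, hC, hpre⟩ := T.exists_preimage_norm_le hT
  refine ⟨C⁻¹, inv_pos.mpr hC, fun y => ?_⟩
  obtain ⟨x, rfl, hx⟩ := hpre y
  have hsq : ‖T x‖ * ‖T x‖ ≤ ‖(T†) (T x)‖ * C * ‖T x‖ :=
    calc ‖T x‖ * ‖T x‖ = ⟪(T†) (T x), x⟫ := by
          rw [adjoint_inner_left, real_inner_self_eq_norm_mul_norm]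
      _ ≤ ‖(T†) (T x)‖ * ‖x‖ := real_inner_le_norm _ _
      _ ≤ ‖(T†) (T x)‖ * (C * ‖T x‖) := by gcongr
      _ = ‖(T†) (T x)‖ * C * ‖T x‖ := by ring
  rcases (norm_nonneg (T x)).eq_or_lt with hzero | hpos
  · simp [← hzero]
  · rw [inv_mul_le_iff₀ hC, mul_comm]
    exact le_of_mul_le_mul_right hsq hpos

theorem isCoercive_innerSL_comp_self_comp_adjoint {T : E →L[ℝ] F} {A : ℝ} (hA : 0 < A)
    (h : ∀ y, A * ‖y‖ ^ 2 ≤ ‖(T†) y‖ ^ 2) : IsCoercive ((innerSL ℝ).comp (T ∘L T†)) := by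
  refine ⟨A, hA, fun y => ?_⟩
  have : ⟪T ((T†) y), y⟫ = ‖(T†) y‖ ^ 2 := by
    rw [← adjoint_inner_right, real_inner_self_eq_norm_sq]
  simpa [mul_assoc, ← sq, this] using h y

theorem surjective_of_mul_norm_sq_le_norm_adjoint_apply_sq {T : E →L[ℝ] F} {A : ℝ} (hA : 0 < A)
    (h : ∀ y, A * ‖y‖ ^ 2 ≤ ‖(T†) y‖ ^ 2) : Function.Surjective T := by
  have hB := isCoercive_innerSL_comp_self_comp_adjoint hA h
  intro y
  obtain ⟨z, rfl⟩ := LinearMap.range_eq_top.mp hB.range_eq_top y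
  exact ⟨(T†) z, InnerProductSpace.unique_continuousLinearMapOfBilin _ fun _ => rfl⟩

theorem surjective_iff_exists_mul_norm_sq_le_norm_adjoint_apply_sq (T : E →L[ℝ] F) :
    Function.Surjective T ↔ ∃ A > 0, ∀ y, A * ‖y‖ ^ 2 ≤ ‖(T†) y‖ ^ 2 := by
  refine ⟨fun hT => ?_, fun ⟨_, hA, h⟩ => surjective_of_mul_norm_sq_le_norm_adjoint_apply_sq hA h⟩
  obtain ⟨c, hc, h⟩ := exists_mul_norm_le_norm_adjoint_apply_of_surjective hT
  refine ⟨c ^ 2, by positivity, fun y => ?_⟩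
  rw [← mul_pow]
  gcongr
  exact h y

end ContinuousLinearMap

theorem tsum_inner_apply_single_sq {ι H : Type*} [NormedAddCommGroup H] [InnerProductSpace ℝ H]
    [CompleteSpace H] [DecidableEq ι] (T : lp (fun _ : ι => ℝ) 2 →L[ℝ] H) (x : H) :
    ∑' k, ⟪x, T (lp.single 2 k 1)⟫ ^ 2 = ‖(T†) x‖ ^ 2 := by
  have hcoord : ∀ k, ⟪x, T (lp.single 2 k 1)⟫ = (T†) x k := fun k => by
    rw [← ContinuousLinearMap.adjoint_inner_left]
    simpa using (lp.inner_single_right (𝕜 := ℝ) k (1 : ℝ) ((T†) x))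
  rw [← real_inner_self_eq_norm_sq, lp.inner_eq_tsum]
  simp [hcoord, sq]

/-- Let `H` be a real Hilbert space and `ℓ²` the space of square-summable real
sequences with canonical unit vectors `δ_k`. A bounded linear operator `T : ℓ² → H` is
surjective if and only if `(T δ_k)_k` is a frame of `H`, i.e. there are constants `0 < A ≤ B`
with `A‖x‖² ≤ Σ_k ⟨x, T δ_k⟩² ≤ B‖x‖²` for all `x ∈ H`. -/
theorem surjective_iff_synthesis_operator_of_frame
    {H : Type*} [NormedAddCommGroup H] [InnerProductSpace ℝ H] [CompleteSpace H]
    (T : lp (fun _ : ℕ => ℝ) 2 →L[ℝ] H) :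
    Function.Surjective T ↔
    ∃ A B : ℝ, 0 < A ∧ A ≤ B ∧
      ∀ x : H, A * ‖x‖ ^ 2 ≤ ∑' k : ℕ, ⟪x, T (lp.single 2 k 1)⟫ ^ 2 ∧
        ∑' k : ℕ, ⟪x, T (lp.single 2 k 1)⟫ ^ 2 ≤ B * ‖x‖ ^ 2 := by
  simp_rw [T.surjective_iff_exists_mul_norm_sq_le_norm_adjoint_apply_sq,
    tsum_inner_apply_single_sq]
  constructor
  · rintro ⟨A, hA, hlower⟩
    -- `‖T†‖ ^ 2` alone can be smaller than `A`, e.g. when `H` is trivial.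
    refine ⟨A, A + ‖T†‖ ^ 2, hA, le_add_of_nonneg_right (by positivity), fun x => ⟨hlower x, ?_⟩⟩
    calc ‖(T†) x‖ ^ 2 ≤ ‖T†‖ ^ 2 * ‖x‖ ^ 2 := by
          rw [← mul_pow]; gcongr; exact (T†).le_opNorm x
      _ ≤ (A + ‖T†‖ ^ 2) * ‖x‖ ^ 2 := by gcongr; linarith
  · rintro ⟨A, _, hA, -, hframe⟩
    exact ⟨A, hA, fun x => (hframe x).1⟩
end

section
/- Let T : H → ℓ² be a bounded linear, injective operator with closed range (i.e., the analysis operator of a frame of the real Hilbert space H), with Moore–Penrose inverse T†, and let λ > 0. Define f : H → ℝ ∪ {+∞} by f(y) := (1/‖T‖²)·inf{ λ‖T y − z‖_{ℓ¹} + ½‖z‖²_{ℓ²} : z ∈ ker T* }, where ‖c‖_{ℓ¹} = Σ_k |c_k| (with value +∞ if not summable). Then for every x ∈ H the point T†(S_λ(T x)) is the unique minimizer over y ∈ H of ½‖x − y‖²_T + f(y). -/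
open RealInnerProductSpace ContinuousLinearMap
open scoped ENNReal NNReal

/-- Soft shrinkage on `ℝ`. -/
noncomputable def softShrink (lam x : ℝ) : ℝ :=
  if x > lam then x - lam else if x < -lam then x + lam else 0

/-- The `ℓ¹`-"norm" of a square-summable sequence, with value `+∞` if not summable. -/
noncomputable def l1NormE (c : lp (fun _ : ℕ => ℝ) 2) : EReal :=
  ((∑' k : ℕ, (‖(c : ∀ _ : ℕ, ℝ) k‖₊ : ℝ≥0∞) : ℝ≥0∞) : EReal)

/-!
Let `u = S_λ(Tx)`, `y⋆ = T†u` and `z⋆ = Ty⋆ - u`. As `TT†` is the orthogonal projection onto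
`ran T = (ker T*)ᗮ`, `z⋆ ∈ ker T*`, and `‖Tw + z‖² = ‖Tw‖² + ‖z‖²` for `z ∈ ker T*`.
Soft shrinkage is the proximal map of `λ|·|` in the strong form
`½(t - σ)² + λ|σ| + ½(s - σ)² ≤ ½(t - s)² + λ|s|` for `σ = S_λ(t)`.
Summing over the coordinates with `s = (Ty - z)ₖ` and splitting by Pythagoras gives
`‖T‖² (½‖x - y‖²_T + f(y)) ≥ m + ½‖T(y - y⋆)‖²` with `m = ½‖Tx - u‖² + λ‖u‖₁`, and equality
at `y = y⋆`, where the infimum defining `f(y⋆)` is attained at `z = z⋆`. Injectivity of `T`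
turns the quadratic growth into uniqueness.
-/

def IsUniqueMin {α β : Type*} [LE β] (φ : α → β) (a : α) : Prop :=
  (∀ y, φ a ≤ φ y) ∧ ∀ y, φ y ≤ φ a → y = a

theorem EReal.coe_mul_le_coe_mul_iff {c : ℝ} (hc : 0 < c) {p q : EReal} :
    (c : EReal) * p ≤ c * q ↔ p ≤ q := by
  have hcancel : ∀ r : EReal, ((c⁻¹ : ℝ) : EReal) * (c * r) = r := fun r => by
    rw [← mul_assoc, ← EReal.coe_mul, inv_mul_cancel₀ hc.ne', EReal.coe_one, one_mul]
  refine ⟨fun h => ?_, fun h => mul_le_mul_of_nonneg_left h (EReal.coe_nonneg.2 hc.le)⟩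
  simpa only [hcancel] using
    mul_le_mul_of_nonneg_left h (EReal.coe_nonneg.2 (inv_nonneg.2 hc.le))

namespace IsUniqueMin

variable {α : Type*} {φ : α → EReal} {a : α}

theorem of_coe_add_le (m : ℝ) (d : α → ℝ) (hd : ∀ y, 0 ≤ d y) (hd_eq_zero : ∀ y, d y = 0 → y = a)
    (hle : ∀ y, ((m + d y : ℝ) : EReal) ≤ φ y) (ha : φ a ≤ m) : IsUniqueMin φ a := by
  refine ⟨fun y => ha.trans ?_, fun y hy => hd_eq_zero y ?_⟩
  · exact (EReal.coe_le_coe_iff.2 (le_add_of_nonneg_right (hd y))).trans (hle y)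
  · have := EReal.coe_le_coe_iff.1 ((hle y).trans (hy.trans ha))
    linarith [hd y]

theorem const_mul (h : IsUniqueMin φ a) {c : ℝ} (hc : 0 < c) :
    IsUniqueMin (fun y => (c : EReal) * φ y) a :=
  ⟨fun y => (EReal.coe_mul_le_coe_mul_iff hc).2 (h.1 y),
    fun y hy => h.2 y ((EReal.coe_mul_le_coe_mul_iff hc).1 hy)⟩

end IsUniqueMin

section PseudoInverse

variable {E F : Type*} [NormedAddCommGroup E] [InnerProductSpace ℝ E] [CompleteSpace E]
  [NormedAddCommGroup F] [InnerProductSpace ℝ F] [CompleteSpace F]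

theorem norm_apply_add_sq_of_mem_ker_adjoint (T : E →L[ℝ] F) (w : E) {z : F}
    (hz : z ∈ LinearMap.ker (adjoint T : F →ₗ[ℝ] E)) :
    ‖T w + z‖ ^ 2 = ‖T w‖ ^ 2 + ‖z‖ ^ 2 := by
  have hz' : adjoint T z = 0 := hz
  have horth : ⟪T w, z⟫ = 0 := by rw [← adjoint_inner_right, hz', inner_zero_right]
  rw [norm_add_sq_real, horth]
  ring

theorem apply_pinv_sub_mem_ker_adjoint {T : E →L[ℝ] F} {Td : F →L[ℝ] E}
    (h₁ : T ∘L Td ∘L T = T) (h₃ : IsSelfAdjoint (T ∘L Td)) (u : F) :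
    T (Td u) - u ∈ LinearMap.ker (adjoint T : F →ₗ[ℝ] E) := by
  rw [← orthogonal_range, Submodule.mem_orthogonal]
  rintro _ ⟨w, rfl⟩
  have hsymm : ⟪T (Td (T w)), u⟫ = ⟪T w, T (Td u)⟫ := h₃.isSymmetric (T w) u
  have hproj : T (Td (T w)) = T w := DFunLike.congr_fun h₁ w
  rw [coe_coe, inner_sub_right, ← hsymm, hproj, sub_self]

theorem isUniqueMin_pinv_of_prox {T : E →L[ℝ] F} (hT : Function.Injective T) {Td : F →L[ℝ] E}
    (h₁ : T ∘L Td ∘L T = T) (h₃ : IsSelfAdjoint (T ∘L Td)) (g : F → EReal) (x : E) (u : F)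
    (r : ℝ) (hu : g u = r)
    (hprox : ∀ v, ((2⁻¹ * ‖T x - u‖ ^ 2 + r + 2⁻¹ * ‖v - u‖ ^ 2 : ℝ) : EReal) ≤
      ((2⁻¹ * ‖T x - v‖ ^ 2 : ℝ) : EReal) + g v) :
    IsUniqueMin (fun y => ((2⁻¹ * ‖T (x - y)‖ ^ 2 : ℝ) : EReal) +
      ⨅ z ∈ LinearMap.ker (adjoint T : F →ₗ[ℝ] E), (g (T y - z) + ((2⁻¹ * ‖z‖ ^ 2 : ℝ) : EReal)))
      (Td u) := by
  set K := LinearMap.ker (adjoint T : F →ₗ[ℝ] E)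
  have hz₀ : T (Td u) - u ∈ K := apply_pinv_sub_mem_ker_adjoint h₁ h₃ u
  refine .of_coe_add_le (2⁻¹ * ‖T x - u‖ ^ 2 + r) (fun y => 2⁻¹ * ‖T (y - Td u)‖ ^ 2)
    (fun y => by positivity) (fun y hy => ?_) (fun y => ?_) ?_
  · have : T (y - Td u) = T 0 := by simpa using hy
    exact sub_eq_zero.1 (hT this)
  · refine le_of_le_of_eq ((EReal.sub_le_iff_le_add (.inl (EReal.coe_ne_bot _))
      (.inl (EReal.coe_ne_top _))).1 (le_iInf₂ fun z hz => ?_)) (add_comm _ _)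
    rw [EReal.sub_le_iff_le_add (.inl (EReal.coe_ne_bot _)) (.inl (EReal.coe_ne_top _))]
    -- `hprox` at `v = Ty - z`, with `Tx - v` and `v - u` split along `ran T ⊕ ker T*`
    have hx : T x - (T y - z) = T (x - y) + z := by rw [map_sub]; abel
    have hy : T y - z - u = T (y - Td u) + (T (Td u) - u - z) := by rw [map_sub]; abel
    calc _ ≤ ((2⁻¹ * ‖T x - u‖ ^ 2 + r + 2⁻¹ * ‖T y - z - u‖ ^ 2 : ℝ) : EReal) := by
          rw [EReal.coe_le_coe_iff, hy,
            norm_apply_add_sq_of_mem_ker_adjoint T _ (K.sub_mem hz₀ hz)]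
          nlinarith [sq_nonneg ‖T (Td u) - u - z‖]
      _ ≤ _ := hprox _
      _ = _ := by
          rw [hx, norm_apply_add_sq_of_mem_ker_adjoint T _ hz, mul_add, EReal.coe_add]
          ac_rfl
  · have hx : T x - u = T (x - Td u) + (T (Td u) - u) := by rw [map_sub]; abel
    calc _ ≤ ((2⁻¹ * ‖T (x - Td u)‖ ^ 2 : ℝ) : EReal) +
          (g (T (Td u) - (T (Td u) - u)) + ((2⁻¹ * ‖T (Td u) - u‖ ^ 2 : ℝ) : EReal)) :=
          add_le_add_right (iInf₂_le _ hz₀) _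
      _ = _ := by
          rw [sub_sub_cancel, hu, hx, norm_apply_add_sq_of_mem_ker_adjoint T _ hz₀]
          norm_cast
          ring

end PseudoInverse

section SoftShrink

variable {lam : ℝ}

theorem softShrink_prox_ineq (hlam : 0 ≤ lam) (t s : ℝ) :
    2⁻¹ * (t - softShrink lam t) ^ 2 + lam * |softShrink lam t| + 2⁻¹ * (s - softShrink lam t) ^ 2
      ≤ 2⁻¹ * (t - s) ^ 2 + lam * |s| := by
  have hs₁ := le_abs_self s
  have hs₂ := neg_abs_le s
  unfold softShrink
  split_ifs with hpos hneg
  · rw [abs_of_pos (by linarith)]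
    nlinarith [mul_nonneg hlam (sub_nonneg.2 hs₁)]
  · rw [abs_of_neg (by linarith)]
    nlinarith [mul_nonneg hlam (by linarith : 0 ≤ |s| + s)]
  · rw [abs_zero]
    nlinarith [mul_nonneg (by linarith : 0 ≤ lam - t) (by linarith : 0 ≤ |s| + s),
      mul_nonneg (by linarith : 0 ≤ lam + t) (by linarith : 0 ≤ |s| - s)]

theorem abs_softShrink_le (hlam : 0 < lam) (t : ℝ) : |softShrink lam t| ≤ t ^ 2 / lam := by
  rw [le_div_iff₀ hlam]
  unfold softShrink
  split_ifs with hpos hneg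
  · rw [abs_of_pos (by linarith)]
    nlinarith
  · rw [abs_of_neg (by linarith)]
    nlinarith
  · rw [abs_zero, zero_mul]
    positivity

variable {ι : Type*}

theorem lp.hasSum_sq (w : lp (fun _ : ι => ℝ) 2) : HasSum (fun i => w i ^ 2) (‖w‖ ^ 2) := by
  simpa only [real_inner_self_eq_norm_sq, Real.norm_eq_abs, sq_abs] using
    lp.hasSum_inner (𝕜 := ℝ) w w

theorem summable_abs_softShrink (hlam : 0 < lam) (c : lp (fun _ : ι => ℝ) 2) :
    Summable fun i => |softShrink lam (c i)| :=
  .of_nonneg_of_le (fun _ => abs_nonneg _) (fun i => abs_softShrink_le hlam (c i))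
    ((lp.hasSum_sq c).summable.div_const lam)

theorem softShrink_prox_ineq_lp (hlam : 0 ≤ lam) {c u v : lp (fun _ : ι => ℝ) 2}
    (hu : ∀ i, u i = softShrink lam (c i)) (hu₁ : Summable fun i => |u i|)
    (hv₁ : Summable fun i => |v i|) :
    2⁻¹ * ‖c - u‖ ^ 2 + lam * ∑' i, |u i| + 2⁻¹ * ‖v - u‖ ^ 2
      ≤ 2⁻¹ * ‖c - v‖ ^ 2 + lam * ∑' i, |v i| := by
  refine hasSum_le (fun i => ?_)
    ((((lp.hasSum_sq (c - u)).mul_left 2⁻¹).add (hu₁.hasSum.mul_left lam)).add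
      ((lp.hasSum_sq (v - u)).mul_left 2⁻¹))
    (((lp.hasSum_sq (c - v)).mul_left 2⁻¹).add (hv₁.hasSum.mul_left lam))
  simpa only [lp.coeFn_sub, Pi.sub_apply, hu] using softShrink_prox_ineq hlam (c i) (v i)

end SoftShrink

theorem l1NormE_eq_tsum_abs {c : lp (fun _ : ℕ => ℝ) 2} (hc : Summable fun k => |c k|) :
    l1NormE c = ((∑' k, |c k| : ℝ) : EReal) := by
  have hc' : Summable fun k => ‖c k‖₊ := by
    simpa only [← NNReal.summable_coe, coe_nnnorm, Real.norm_eq_abs] using hc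
  rw [l1NormE, ← ENNReal.coe_tsum hc', EReal.coe_nnreal_eq_coe_real, NNReal.coe_tsum]
  simp only [coe_nnnorm, Real.norm_eq_abs]

theorem l1NormE_eq_top_of_not_summable {c : lp (fun _ : ℕ => ℝ) 2}
    (hc : ¬Summable fun k => |c k|) : l1NormE c = ⊤ := by
  have hc' : ¬Summable fun k => ‖c k‖₊ := by
    simpa only [← NNReal.summable_coe, coe_nnnorm, Real.norm_eq_abs] using hc
  rw [l1NormE, not_not.1 (mt ENNReal.tsum_coe_ne_top_iff_summable.1 hc'), EReal.coe_ennreal_top]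

theorem softShrink_prox_ineq_l1NormE {lam : ℝ} (hlam : 0 < lam) {c u : lp (fun _ : ℕ => ℝ) 2}
    (hu : ∀ k, u k = softShrink lam (c k)) (hu₁ : Summable fun k => |u k|)
    (v : lp (fun _ : ℕ => ℝ) 2) :
    ((2⁻¹ * ‖c - u‖ ^ 2 + lam * ∑' k, |u k| + 2⁻¹ * ‖v - u‖ ^ 2 : ℝ) : EReal) ≤
      ((2⁻¹ * ‖c - v‖ ^ 2 : ℝ) : EReal) + lam * l1NormE v := by
  by_cases hv₁ : Summable fun k => |v k|
  · rw [l1NormE_eq_tsum_abs hv₁, ← EReal.coe_mul, ← EReal.coe_add, EReal.coe_le_coe_iff]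
    exact softShrink_prox_ineq_lp hlam.le hu hu₁ hv₁
  · rw [l1NormE_eq_top_of_not_summable hv₁, EReal.coe_mul_top_of_pos hlam, EReal.coe_add_top]
    exact le_top

theorem frame_soft_shrinkage_is_prox_general
    {H : Type*} [NormedAddCommGroup H] [InnerProductSpace ℝ H] [CompleteSpace H]
    (T : H →L[ℝ] lp (fun _ : ℕ => ℝ) 2) (hT : T ≠ 0)
    (hInj : Function.Injective T)
    -- `Td` is the Moore–Penrose inverse of `T`:
    (Td : lp (fun _ : ℕ => ℝ) 2 →L[ℝ] H)
    (hMP1 : T ∘L Td ∘L T = T)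
    (hMP3 : IsSelfAdjoint (T ∘L Td))
    (lam : ℝ) (hlam : 0 < lam)
    -- `Sc` is the componentwise soft shrinkage on `ℓ²`:
    (Sc : lp (fun _ : ℕ => ℝ) 2 → lp (fun _ : ℕ => ℝ) 2)
    (hSc : ∀ (c : lp (fun _ : ℕ => ℝ) 2) (k : ℕ),
      (Sc c : ∀ _ : ℕ, ℝ) k = softShrink lam ((c : ∀ _ : ℕ, ℝ) k))
    -- the function `f`:
    (f : H → EReal)
    (hf : ∀ y : H, f y = (((‖T‖ ^ 2)⁻¹ : ℝ) : EReal) *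
      ⨅ z ∈ LinearMap.ker ((adjoint T : lp (fun _ : ℕ => ℝ) 2 →ₗ[ℝ] H)),
        ((lam : EReal) * l1NormE (T y - z) + ((2⁻¹ * ‖z‖ ^ 2 : ℝ) : EReal)))
    -- the objective `F x y = ½‖x − y‖²_T + f(y)`:
    (F : H → H → EReal)
    (hF : ∀ x y : H, F x y = ((2⁻¹ * (‖T (x - y)‖ ^ 2 / ‖T‖ ^ 2) : ℝ) : EReal) + f y) :
    ∀ x : H,
      (∀ y : H, F x (Td (Sc (T x))) ≤ F x y) ∧
      (∀ y : H, F x y ≤ F x (Td (Sc (T x))) → y = Td (Sc (T x))) := by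
  intro x
  have hc : 0 < (‖T‖ ^ 2)⁻¹ := by have := norm_pos_iff.2 hT; positivity
  have hu₁ : Summable fun k => |Sc (T x) k| := by
    simpa only [hSc] using summable_abs_softShrink hlam (T x)
  have hmin := (isUniqueMin_pinv_of_prox hInj hMP1 hMP3 (fun v => (lam : EReal) * l1NormE v) x
    (Sc (T x)) (lam * ∑' k, |Sc (T x) k|) (by rw [l1NormE_eq_tsum_abs hu₁, EReal.coe_mul])
    (softShrink_prox_ineq_l1NormE hlam (hSc (T x)) hu₁)).const_mul hc
  have hFx : ∀ y, F x y = (((‖T‖ ^ 2)⁻¹ : ℝ) : EReal) * (((2⁻¹ * ‖T (x - y)‖ ^ 2 : ℝ) : EReal) +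
      ⨅ z ∈ LinearMap.ker ((adjoint T : lp (fun _ : ℕ => ℝ) 2 →ₗ[ℝ] H)),
        ((lam : EReal) * l1NormE (T y - z) + ((2⁻¹ * ‖z‖ ^ 2 : ℝ) : EReal))) := fun y => by
    rw [hF, hf, EReal.left_distrib_of_nonneg_of_ne_top (EReal.coe_nonneg.2 hc.le)
      (EReal.coe_ne_top _), ← EReal.coe_mul]
    congr 2
    ring
  simpa only [IsUniqueMin, hFx] using hmin

/-- Let `T : H → ℓ²` be a bounded linear injective operator with closed range
(the analysis operator of a frame of `H`) with Moore–Penrose inverse `T†`, and `λ > 0`.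
With `f(y) := (1/‖T‖²)·inf{ λ‖Ty − z‖₁ + ½‖z‖²_{ℓ²} : z ∈ ker T* }`, for every `x ∈ H` the
point `T†(S_λ(Tx))` is the unique minimizer over `y ∈ H` of `½‖x − y‖²_T + f(y)`, where
(since `T` is injective) `‖u‖²_T = ‖Tu‖²/‖T‖²` and `S_λ` is the componentwise soft
shrinkage. -/
theorem frame_soft_shrinkage_is_prox
    {H : Type*} [NormedAddCommGroup H] [InnerProductSpace ℝ H] [CompleteSpace H]
    (T : H →L[ℝ] lp (fun _ : ℕ => ℝ) 2) (hT : T ≠ 0)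
    (hInj : Function.Injective T)
    (hRange : IsClosed (LinearMap.range (T : H →ₗ[ℝ] lp (fun _ : ℕ => ℝ) 2) : Set (lp (fun _ : ℕ => ℝ) 2)))
    -- `Td` is the Moore–Penrose inverse of `T`:
    (Td : lp (fun _ : ℕ => ℝ) 2 →L[ℝ] H)
    (hMP1 : T ∘L Td ∘L T = T) (hMP2 : Td ∘L T ∘L Td = Td)
    (hMP3 : IsSelfAdjoint (T ∘L Td)) (hMP4 : IsSelfAdjoint (Td ∘L T))
    (lam : ℝ) (hlam : 0 < lam)
    -- `Sc` is the componentwise soft shrinkage on `ℓ²`: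
    (Sc : lp (fun _ : ℕ => ℝ) 2 → lp (fun _ : ℕ => ℝ) 2)
    (hSc : ∀ (c : lp (fun _ : ℕ => ℝ) 2) (k : ℕ),
      (Sc c : ∀ _ : ℕ, ℝ) k = softShrink lam ((c : ∀ _ : ℕ, ℝ) k))
    -- the function `f`:
    (f : H → EReal)
    (hf : ∀ y : H, f y = (((‖T‖ ^ 2)⁻¹ : ℝ) : EReal) *
      ⨅ z ∈ LinearMap.ker ((adjoint T : lp (fun _ : ℕ => ℝ) 2 →ₗ[ℝ] H)),
        ((lam : EReal) * l1NormE (T y - z) + ((2⁻¹ * ‖z‖ ^ 2 : ℝ) : EReal)))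
    -- the objective `F x y = ½‖x − y‖²_T + f(y)`:
    (F : H → H → EReal)
    (hF : ∀ x y : H, F x y = ((2⁻¹ * (‖T (x - y)‖ ^ 2 / ‖T‖ ^ 2) : ℝ) : EReal) + f y) :
    ∀ x : H,
      (∀ y : H, F x (Td (Sc (T x))) ≤ F x y) ∧
      (∀ y : H, F x y ≤ F x (Td (Sc (T x))) → y = Td (Sc (T x))) :=
  frame_soft_shrinkage_is_prox_general T hT hInj Td hMP1 hMP3 lam hlam Sc hSc f hf F hF
end

section
/- Let T ∈ ℝ^{n×d} with n ≥ d and rank(T) = d, let λ > 0 and T† = (TᵀT)⁻¹Tᵀ. Define f : ℝ^d → ℝ by f(y) := (1/‖T‖²)·min{ λ‖T y − z‖₁ + ½‖z‖₂² : z ∈ ℝ^n, Tᵀ z = 0 }, where ‖T‖ is the spectral norm of T. Then for every x ∈ ℝ^d the point T† S_λ(T x) is the unique minimizer over y ∈ ℝ^d of ½‖x − y‖²_T + f(y), where ‖y‖_T := ‖T y‖₂/‖T‖. -/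
/-!
Soft shrinkage is the proximal map of `λ‖·‖₁`, in the strong form of the three-point inequality
`½‖a - p‖² + g p + ½‖t - p‖² ≤ ½‖a - t‖² + g t`. Let `K = ker Tᵀ`, so that `range T ⊆ Kᗮ`.
Taking the infimal convolution of `g` with `½‖·‖²` over `K` and restricting to `Kᗮ` preserves
this inequality, with the prox point `p` replaced by its orthogonal projection `q` onto `Kᗮ`:
decompose `a - (v - z)` and `(v - z) - p` along `Kᗮ ⊕ K` and use Pythagoras. For `a = T x`,
`p = S_λ(T x)` one has `q = T T† p`, and dividing by `‖T‖²` turns the inequality into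
`F x y* + ½‖y - y*‖²_T ≤ F x y`, which gives both minimality and uniqueness.
-/

open ContinuousLinearMap

section Prox

variable {E : Type*} [NormedAddCommGroup E] [InnerProductSpace ℝ E]

/-- The three-point inequality; for convex `g` it characterizes `p = prox_g a` on `s`. -/
def IsProxPointOn (s : Set E) (g : E → ℝ) (a p : E) : Prop :=
  ∀ t ∈ s, 2⁻¹ * ‖a - p‖ ^ 2 + g p + 2⁻¹ * ‖t - p‖ ^ 2 ≤ 2⁻¹ * ‖a - t‖ ^ 2 + g t

noncomputable def infConvHalfSq (K : Submodule ℝ E) (g : E → ℝ) (v : E) : ℝ :=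
  sInf {c : ℝ | ∃ z ∈ K, c = g (v - z) + 2⁻¹ * ‖z‖ ^ 2}

theorem Submodule.norm_add_sq_of_mem_orthogonal {K : Submodule ℝ E} {u z : E}
    (hu : u ∈ Kᗮ) (hz : z ∈ K) : ‖u + z‖ ^ 2 = ‖u‖ ^ 2 + ‖z‖ ^ 2 := by
  rw [norm_add_sq_real, K.inner_left_of_mem_orthogonal hz hu]; ring

theorem IsProxPointOn.infConvHalfSq_orthogonal {K : Submodule ℝ E} {g : E → ℝ} {a p q : E}
    (hp : IsProxPointOn Set.univ g a p) (ha : a ∈ Kᗮ) (hq : q ∈ Kᗮ) (hqp : q - p ∈ K) :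
    IsProxPointOn Kᗮ (infConvHalfSq K g) a q := by
  have lower : ∀ v ∈ Kᗮ, 2⁻¹ * ‖a - p‖ ^ 2 + g p + 2⁻¹ * ‖v - q‖ ^ 2 - 2⁻¹ * ‖a - v‖ ^ 2 ∈
      lowerBounds {c : ℝ | ∃ z ∈ K, c = g (v - z) + 2⁻¹ * ‖z‖ ^ 2} := by
    rintro v hv _ ⟨z, hz, rfl⟩
    have h₁ : ‖v - z - p‖ ^ 2 = ‖v - q‖ ^ 2 + ‖q - p - z‖ ^ 2 := by
      rw [← Submodule.norm_add_sq_of_mem_orthogonal (Kᗮ.sub_mem hv hq) (K.sub_mem hqp hz)]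
      congr 2; abel
    have h₂ : ‖a - (v - z)‖ ^ 2 = ‖a - v‖ ^ 2 + ‖z‖ ^ 2 := by
      rw [← Submodule.norm_add_sq_of_mem_orthogonal (Kᗮ.sub_mem ha hv) hz]
      congr 2; abel
    have := hp (v - z) trivial
    nlinarith [sq_nonneg ‖q - p - z‖]
  have h_at_q : infConvHalfSq K g q ≤ g p + 2⁻¹ * ‖q - p‖ ^ 2 :=
    csInf_le ⟨_, lower q hq⟩ ⟨q - p, hqp, by rw [sub_sub_cancel]⟩
  have h_split : ‖a - p‖ ^ 2 = ‖a - q‖ ^ 2 + ‖q - p‖ ^ 2 := by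
    rw [← Submodule.norm_add_sq_of_mem_orthogonal (Kᗮ.sub_mem ha hq) hqp, sub_add_sub_cancel]
  intro v hv
  have h_at_v : _ ≤ infConvHalfSq K g v := le_csInf ⟨_, 0, K.zero_mem, rfl⟩ (lower v hv)
  linarith

end Prox

namespace ContinuousLinearMap

theorem apply_mem_orthogonal_ker_adjoint {𝕜 E F : Type*} [RCLike 𝕜] [NormedAddCommGroup E]
    [InnerProductSpace 𝕜 E] [CompleteSpace E] [NormedAddCommGroup F] [InnerProductSpace 𝕜 F]
    [CompleteSpace F] (T : E →L[𝕜] F) (v : E) : T v ∈ (adjoint T).kerᗮ := by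
  rw [← T.orthogonal_range]
  exact Submodule.le_orthogonal_orthogonal _ ⟨v, rfl⟩

theorem norm_apply_div_opNorm_eq_zero_iff {𝕜 E F : Type*} [NontriviallyNormedField 𝕜]
    [NormedAddCommGroup E] [NormedSpace 𝕜 E] [NormedAddCommGroup F] [NormedSpace 𝕜 F]
    (T : E →L[𝕜] F) (v : E) : ‖T v‖ / ‖T‖ = 0 ↔ T v = 0 := by
  refine ⟨fun h => ?_, fun h => by rw [h, norm_zero, zero_div]⟩
  rcases div_eq_zero_iff.mp h with h | h
  · exact norm_eq_zero.mp h
  · rw [norm_eq_zero.mp h, zero_apply]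

end ContinuousLinearMap

theorem isProxPointOn_abs_softShrink {lam : ℝ} (hlam : 0 ≤ lam) (a : ℝ) :
    IsProxPointOn Set.univ (fun t => lam * |t|) a (softShrink lam a) := by
  intro t _
  have ht₁ := le_abs_self t
  have ht₂ := neg_abs_le t
  simp only [Real.norm_eq_abs, sq_abs]
  unfold softShrink
  split_ifs with h₁ h₂
  · rw [abs_of_pos (sub_pos.mpr h₁)]; nlinarith
  · rw [abs_of_neg (by linarith)]; nlinarith
  · rw [abs_zero]; nlinarith [not_lt.mp h₁, not_lt.mp h₂]

theorem isProxPointOn_l1_softShrink {ι : Type*} [Fintype ι] {lam : ℝ} (hlam : 0 ≤ lam)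
    (a : EuclideanSpace ℝ ι) :
    IsProxPointOn Set.univ (fun u : EuclideanSpace ℝ ι => lam * ∑ i, |u i|) a
      (WithLp.toLp 2 fun i => softShrink lam (a i)) := by
  intro t _
  simp only [EuclideanSpace.norm_sq_eq, PiLp.sub_apply, Finset.mul_sum,
    ← Finset.sum_add_distrib]
  exact Finset.sum_le_sum fun i _ => isProxPointOn_abs_softShrink hlam (a i) (t i) trivial

theorem frame_soft_shrinkage_is_prox_finiteDim_general {n d : ℕ}
    (T : EuclideanSpace ℝ (Fin d) →L[ℝ] EuclideanSpace ℝ (Fin n))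
    (lam : ℝ) (hlam : 0 < lam)
    -- `TᵀT` is invertible with inverse `S`, and `T† = (TᵀT)⁻¹Tᵀ = S ∘ T*`:
    (S : EuclideanSpace ℝ (Fin d) →L[ℝ] EuclideanSpace ℝ (Fin d))
    (hS1 : S ∘L (adjoint T ∘L T) = ContinuousLinearMap.id ℝ (EuclideanSpace ℝ (Fin d)))
    (hS2 : (adjoint T ∘L T) ∘L S = ContinuousLinearMap.id ℝ (EuclideanSpace ℝ (Fin d)))
    (Td : EuclideanSpace ℝ (Fin n) →L[ℝ] EuclideanSpace ℝ (Fin d))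
    (hTd : Td = S ∘L adjoint T)
    -- the function `f`:
    (f : EuclideanSpace ℝ (Fin d) → ℝ)
    (hf : ∀ y : EuclideanSpace ℝ (Fin d), f y = (‖T‖ ^ 2)⁻¹ *
      sInf {v : ℝ | ∃ z : EuclideanSpace ℝ (Fin n), adjoint T z = 0 ∧
        v = lam * (∑ i, |(T y - z) i|) + 2⁻¹ * ‖z‖ ^ 2})
    -- the objective `F x y = ½‖x − y‖²_T + f(y)`:
    (F : EuclideanSpace ℝ (Fin d) → EuclideanSpace ℝ (Fin d) → ℝ)
    (hF : ∀ x y : EuclideanSpace ℝ (Fin d), F x y = 2⁻¹ * (‖T (x - y)‖ / ‖T‖) ^ 2 + f y) :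
    ∀ x : EuclideanSpace ℝ (Fin d),
      (∀ y : EuclideanSpace ℝ (Fin d),
        F x (Td (WithLp.toLp 2 (fun i => softShrink lam (T x i)))) ≤ F x y) ∧
      (∀ y : EuclideanSpace ℝ (Fin d),
        F x y ≤ F x (Td (WithLp.toLp 2 (fun i => softShrink lam (T x i)))) →
          y = Td (WithLp.toLp 2 (fun i => softShrink lam (T x i)))) := by
  intro x
  set p := WithLp.toLp 2 (fun i => softShrink lam (T x i))
  set K := (adjoint T).ker
  have hT_inj : Function.Injective T :=
    Function.LeftInverse.injective (g := S ∘L adjoint T) fun v => by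
      simpa using DFunLike.congr_fun hS1 v
  have h_range : ∀ v, T v ∈ Kᗮ := T.apply_mem_orthogonal_ker_adjoint
  have h_proj : T (Td p) - p ∈ K := by
    show adjoint T (T (Td p) - p) = 0
    rw [map_sub, sub_eq_zero]
    simpa [hTd] using DFunLike.congr_fun hS2 (adjoint T p)
  have h_prox := (isProxPointOn_l1_softShrink hlam.le (T x)).infConvHalfSq_orthogonal
    (h_range x) (h_range (Td p)) h_proj
  have hF_eq : ∀ y, F x y = (‖T‖ ^ 2)⁻¹ *
      (2⁻¹ * ‖T x - T y‖ ^ 2 + infConvHalfSq K (fun u => lam * ∑ i, |u i|) (T y)) := by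
    intro y
    have hf_y : f y = (‖T‖ ^ 2)⁻¹ * infConvHalfSq K (fun u => lam * ∑ i, |u i|) (T y) := hf y
    rw [hF, hf_y, map_sub, div_pow, div_eq_mul_inv]
    ring
  have h_strong : ∀ y, F x (Td p) + 2⁻¹ * (‖T (y - Td p)‖ / ‖T‖) ^ 2 ≤ F x y := by
    intro y
    have := mul_le_mul_of_nonneg_left (h_prox (T y) (h_range y))
      (by positivity : 0 ≤ (‖T‖ ^ 2)⁻¹)
    rw [hF_eq, hF_eq, map_sub, div_pow, div_eq_mul_inv]
    linarith
  refine ⟨fun y => le_trans (le_add_of_nonneg_right (by positivity)) (h_strong y),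
    fun y hy => ?_⟩
  have h_zero : ‖T (y - Td p)‖ / ‖T‖ = 0 := by nlinarith [h_strong y]
  exact sub_eq_zero.mp (hT_inj.eq_iff' (map_zero T) |>.mp
    ((T.norm_apply_div_opNorm_eq_zero_iff _).mp h_zero))

/-- Let `T ∈ ℝ^{n×d}` with `n ≥ d` and `rank T = d`, `λ > 0` and
`T† = (TᵀT)⁻¹Tᵀ`. Define `f(y) := (1/‖T‖²)·min{ λ‖Ty − z‖₁ + ½‖z‖₂² : Tᵀz = 0 }` with `‖T‖`
the spectral norm. Then for every `x ∈ ℝ^d` the point `T† S_λ(Tx)` is the unique minimizer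
over `y ∈ ℝ^d` of `½‖x − y‖²_T + f(y)`, where `‖y‖_T := ‖Ty‖₂/‖T‖`. -/
theorem frame_soft_shrinkage_is_prox_finiteDim {n d : ℕ} (hd : 0 < d) (hnd : d ≤ n)
    (T : EuclideanSpace ℝ (Fin d) →L[ℝ] EuclideanSpace ℝ (Fin n))
    (hrank : LinearMap.rank (T : EuclideanSpace ℝ (Fin d) →ₗ[ℝ] EuclideanSpace ℝ (Fin n)) = d)
    (lam : ℝ) (hlam : 0 < lam)
    -- `TᵀT` is invertible with inverse `S`, and `T† = (TᵀT)⁻¹Tᵀ = S ∘ T*`: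
    (S : EuclideanSpace ℝ (Fin d) →L[ℝ] EuclideanSpace ℝ (Fin d))
    (hS1 : S ∘L (adjoint T ∘L T) = ContinuousLinearMap.id ℝ (EuclideanSpace ℝ (Fin d)))
    (hS2 : (adjoint T ∘L T) ∘L S = ContinuousLinearMap.id ℝ (EuclideanSpace ℝ (Fin d)))
    (Td : EuclideanSpace ℝ (Fin n) →L[ℝ] EuclideanSpace ℝ (Fin d))
    (hTd : Td = S ∘L adjoint T)
    -- the function `f`:
    (f : EuclideanSpace ℝ (Fin d) → ℝ)
    (hf : ∀ y : EuclideanSpace ℝ (Fin d), f y = (‖T‖ ^ 2)⁻¹ *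
      sInf {v : ℝ | ∃ z : EuclideanSpace ℝ (Fin n), adjoint T z = 0 ∧
        v = lam * (∑ i, |(T y - z) i|) + 2⁻¹ * ‖z‖ ^ 2})
    -- the objective `F x y = ½‖x − y‖²_T + f(y)`:
    (F : EuclideanSpace ℝ (Fin d) → EuclideanSpace ℝ (Fin d) → ℝ)
    (hF : ∀ x y : EuclideanSpace ℝ (Fin d), F x y = 2⁻¹ * (‖T (x - y)‖ / ‖T‖) ^ 2 + f y) :
    ∀ x : EuclideanSpace ℝ (Fin d),
      (∀ y : EuclideanSpace ℝ (Fin d),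
        F x (Td (WithLp.toLp 2 (fun i => softShrink lam (T x i)))) ≤ F x y) ∧
      (∀ y : EuclideanSpace ℝ (Fin d),
        F x y ≤ F x (Td (WithLp.toLp 2 (fun i => softShrink lam (T x i)))) →
          y = Td (WithLp.toLp 2 (fun i => softShrink lam (T x i)))) :=
  frame_soft_shrinkage_is_prox_finiteDim_general T lam hlam S hS1 hS2 Td hTd f hf F hF
end

section
/- Let K ≥ 2, d ≥ 1 and n₁, …, n_{K−1} ≥ 1 be integers. For k = 1, …, K−1 let T_k ∈ ℝ^{n_k×d} be a nonzero matrix satisfying T_kᵀ T_k = ‖T_k‖² I_d or T_k T_kᵀ = ‖T_k‖² I_{n_k} (with ‖T_k‖ the spectral norm), let b_k ∈ ℝ^{n_k} and b_K ∈ ℝ^d, and let g : ℝ → ℝ ∪ {+∞} be proper, convex and lower semicontinuous with one-dimensional proximity operator prox_g. Define the layer maps L_k : ℝ^d → ℝ^d by L_k(x) := ‖T_k‖^{−2} T_kᵀ σ(T_k x + b_k), where σ applies prox_g componentwise, and let Φ(x) := L_{K−1}(⋯ L_2(L_1(x)) ⋯) + b_K. Then Φ is (K−1)/K-averaged: there exists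 a map R : ℝ^d → ℝ^d that is nonexpansive with respect to the Euclidean norm such that Φ(x) = ((K−1)/K)·R(x) + (1/K)·x for all x ∈ ℝ^d. -/
/-!
The proximity operator of a proper convex `g` is firmly nonexpansive: comparing the minimizer
`p` of `½ (z - ·)² + g` with points of the segment towards `q` gives the variational inequality
`(q - p) (z - p) ≤ g q - g p`, and adding two such inequalities gives
`(p₁ - p₂)² ≤ (p₁ - p₂) (z₁ - z₂)`. Firm nonexpansiveness passes to the componentwise map `σ` and
to each layer `x ↦ ‖T‖⁻² Tᵀ σ (T x + b)`, because `‖Tᵀ v‖² ≤ ‖T‖² ‖v‖²`. Firmly nonexpansive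
means `1/2`-averaged, and composing an `m/(m+1)`-averaged map with a `1/2`-averaged one gives an
`(m+1)/(m+2)`-averaged map; so the `K - 1` layers compose to a `(K-1)/K`-averaged map, and the
translation by `b_K` changes nothing.
-/

open RealInnerProductSpace ContinuousLinearMap

/-- Composition of a finite family of maps: `iterComp m L = L (m−1) ∘ ⋯ ∘ L 1 ∘ L 0`. -/
def iterComp {E : Type*} : (m : ℕ) → (Fin m → (E → E)) → (E → E)
  | 0, _ => id
  | m + 1, L => L (Fin.last m) ∘ iterComp m (fun i => L i.castSucc)

open Filter Topology

def IsProxPoint (g : ℝ → EReal) (z p : ℝ) : Prop :=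
  ∀ w : ℝ, ((2⁻¹ * (z - p) ^ 2 : ℝ) : EReal) + g p ≤ ((2⁻¹ * (z - w) ^ 2 : ℝ) : EReal) + g w

def FirmlyNonexpansive {E : Type*} [NormedAddCommGroup E] [InnerProductSpace ℝ E]
    (F : E → E) : Prop :=
  ∀ x y, ‖F x - F y‖ ^ 2 ≤ ⟪F x - F y, x - y⟫

section Prox

variable {g : ℝ → EReal}

lemma IsProxPoint.ne_top {z p : ℝ} (h : IsProxPoint g z p) (hg : ∃ w, g w ≠ ⊤) : g p ≠ ⊤ := by
  obtain ⟨w, hw⟩ := hg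
  intro htop
  have hle := h w
  rw [htop, EReal.coe_add_top, top_le_iff] at hle
  exact (EReal.add_lt_top (EReal.coe_ne_top _) hw).ne hle

lemma IsProxPoint.mul_sub_le {z p q : ℝ} (h : IsProxPoint g z p) (hbot : ∀ w, g w ≠ ⊥)
    (hconv : ∀ (w₁ w₂ : ℝ) (a c : ℝ), 0 ≤ a → 0 ≤ c → a + c = 1 →
      g (a * w₁ + c * w₂) ≤ (a : EReal) * g w₁ + (c : EReal) * g w₂)
    (hp : g p ≠ ⊤) (hq : g q ≠ ⊤) :
    (q - p) * (z - p) ≤ (g q).toReal - (g p).toReal := by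
  set gp := (g p).toReal
  set gq := (g q).toReal
  have hgp : g p = gp := (EReal.coe_toReal hp (hbot p)).symm
  have hgq : g q = gq := (EReal.coe_toReal hq (hbot q)).symm
  -- compare `p` with `(1 - t) p + t q`, use convexity, and divide by `t`
  have hsegment : ∀ t : ℝ, 0 < t → t ≤ 1 →
      (q - p) * (z - p) - (gq - gp) ≤ t * ((q - p) ^ 2 / 2) := by
    intro t ht₀ ht₁
    have hc := hconv p q (1 - t) t (by linarith) ht₀.le (by ring)
    rw [hgp, hgq, ← EReal.coe_mul, ← EReal.coe_mul, ← EReal.coe_add] at hc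
    have hm := h ((1 - t) * p + t * q)
    rw [hgp] at hm
    have hreal : 2⁻¹ * (z - p) ^ 2 + gp ≤
        2⁻¹ * (z - ((1 - t) * p + t * q)) ^ 2 + ((1 - t) * gp + t * gq) := by
      exact_mod_cast hm.trans (add_le_add le_rfl hc)
    nlinarith
  have hlim : Tendsto (fun t : ℝ => t * ((q - p) ^ 2 / 2)) (𝓝[>] 0) (𝓝 0) :=
    tendsto_nhdsWithin_of_tendsto_nhds ((continuous_mul_const _).tendsto' 0 0 (zero_mul _))
  have hnonpos := ge_of_tendsto hlim (mem_of_superset (Ioc_mem_nhdsGT one_pos)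
    fun t ht => hsegment t ht.1 ht.2)
  linarith

theorem firmlyNonexpansive_of_isProxPoint (hbot : ∀ w, g w ≠ ⊥) (hg : ∃ w, g w ≠ ⊤)
    (hconv : ∀ (w₁ w₂ : ℝ) (a c : ℝ), 0 ≤ a → 0 ≤ c → a + c = 1 →
      g (a * w₁ + c * w₂) ≤ (a : EReal) * g w₁ + (c : EReal) * g w₂)
    {prox : ℝ → ℝ} (hprox : ∀ z, IsProxPoint g z (prox z)) : FirmlyNonexpansive prox := by
  intro z₁ z₂
  have h₁ := (hprox z₁).mul_sub_le hbot hconv ((hprox z₁).ne_top hg) ((hprox z₂).ne_top hg)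
  have h₂ := (hprox z₂).mul_sub_le hbot hconv ((hprox z₂).ne_top hg) ((hprox z₁).ne_top hg)
  rw [Real.norm_eq_abs, sq_abs, Real.inner_apply]
  nlinarith

end Prox

theorem firmlyNonexpansive_toLp_comp {ι : Type*} [Fintype ι] {φ : ℝ → ℝ}
    (hφ : FirmlyNonexpansive φ) :
    FirmlyNonexpansive (fun z : EuclideanSpace ℝ ι => WithLp.toLp 2 (fun i => φ (z i))) := by
  intro u v
  rw [← real_inner_self_eq_norm_sq, PiLp.inner_apply, PiLp.inner_apply]
  refine Finset.sum_le_sum fun i _ => ?_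
  simpa only [PiLp.sub_apply, real_inner_self_eq_norm_sq] using hφ (u i) (v i)

theorem FirmlyNonexpansive.scaled_adjoint_comp_affine {E F : Type*}
    [NormedAddCommGroup E] [InnerProductSpace ℝ E] [CompleteSpace E]
    [NormedAddCommGroup F] [InnerProductSpace ℝ F] [CompleteSpace F]
    {σ : F → F} (hσ : FirmlyNonexpansive σ) (T : E →L[ℝ] F) (b : F) :
    FirmlyNonexpansive (fun x => (‖T‖ ^ 2)⁻¹ • adjoint T (σ (T x + b))) := by
  intro x y
  set c := ‖T‖ ^ 2
  set p := σ (T x + b) - σ (T y + b)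
  have hdiff : (c⁻¹ • adjoint T (σ (T x + b))) - c⁻¹ • adjoint T (σ (T y + b)) =
      c⁻¹ • adjoint T p := by
    rw [← smul_sub, ← map_sub]
  have hTxy : (T x + b) - (T y + b) = T (x - y) := by
    rw [map_sub]; abel
  have hadj : ‖adjoint T p‖ ^ 2 ≤ c * ‖p‖ ^ 2 := by
    rw [← mul_pow]
    gcongr
    simpa only [adjoint.norm_map] using (adjoint T).le_opNorm p
  rw [hdiff, norm_smul, Real.norm_eq_abs, abs_inv, abs_sq, real_inner_smul_left,
    adjoint_inner_left]
  calc (c⁻¹ * ‖adjoint T p‖) ^ 2 = c⁻¹ * c⁻¹ * ‖adjoint T p‖ ^ 2 := by ring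
    _ ≤ c⁻¹ * c⁻¹ * (c * ‖p‖ ^ 2) := by gcongr
    _ = c⁻¹ * ‖p‖ ^ 2 := by rcases eq_or_ne c 0 with hc | hc <;> field_simp [hc]
    _ ≤ c⁻¹ * ⟪p, T (x - y)⟫ := by
      gcongr
      rw [← hTxy]
      exact hσ _ _

section Averaged

variable {E : Type*} [NormedAddCommGroup E]

/-- `F` is `m / (m + 1)`-averaged: with `α = m / (m + 1)` this is the characterization
`‖F x - F y‖² + (1 - α) / α * ‖(x - F x) - (y - F y)‖² ≤ ‖x - y‖²`, multiplied by `m`. -/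
def IsAveraged (m : ℝ) (F : E → E) : Prop :=
  ∀ x y, m * ‖F x - F y‖ ^ 2 + ‖(x - y) - (F x - F y)‖ ^ 2 ≤ m * ‖x - y‖ ^ 2

theorem IsAveraged.add_const {m : ℝ} {F : E → E} (h : IsAveraged m F) (c : E) :
    IsAveraged m (fun x => F x + c) := by
  intro x y
  simpa only [add_sub_add_right_eq_sub] using h x y

variable [InnerProductSpace ℝ E]

theorem FirmlyNonexpansive.isAveraged_one {F : E → E} (h : FirmlyNonexpansive F) :
    IsAveraged 1 F := by
  intro x y
  have := h x y
  rw [norm_sub_sq_real (x - y), real_inner_comm]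
  linarith

theorem IsAveraged.comp {m : ℝ} (hm : 0 < m) {F G : E → E} (hF : IsAveraged m F)
    (hG : IsAveraged 1 G) : IsAveraged (m + 1) (G ∘ F) := by
  intro x y
  have hA := hF x y
  have hB := hG (F x) (F y)
  set u := x - y
  set v := F x - F y
  set w := G (F x) - G (F y)
  show (m + 1) * ‖w‖ ^ 2 + ‖u - w‖ ^ 2 ≤ (m + 1) * ‖u‖ ^ 2
  have hC : 0 ≤ ‖(u - v) - m • (v - w)‖ ^ 2 := sq_nonneg _
  rw [norm_sub_sq_real, real_inner_smul_right, norm_smul, mul_pow, Real.norm_eq_abs, sq_abs,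
    norm_sub_sq_real u v, norm_sub_sq_real v w] at hC
  simp only [inner_sub_left, inner_sub_right, real_inner_self_eq_norm_sq] at hC
  rw [norm_sub_sq_real u v] at hA
  rw [norm_sub_sq_real v w] at hB
  rw [norm_sub_sq_real u w]
  refine le_of_mul_le_mul_left ?_ hm
  linear_combination (1 + m) * hA + m * (1 + m) * hB + hC

theorem isAveraged_iterComp {m : ℕ} (hm : 1 ≤ m) (L : Fin m → E → E)
    (hL : ∀ k, IsAveraged 1 (L k)) : IsAveraged m (iterComp m L) := by
  induction m, hm using Nat.le_induction with
  | base => simpa [iterComp] using hL 0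
  | succ m hm ih =>
    push_cast
    exact (ih _ fun k => hL k.castSucc).comp (by positivity) (hL (Fin.last m))

theorem IsAveraged.norm_smul_sub_le {m : ℝ} (hm : 0 ≤ m) {F : E → E} (h : IsAveraged m F)
    (x y : E) : ‖(m + 1) • (F x - F y) - (x - y)‖ ≤ m * ‖x - y‖ := by
  have hxy := h x y
  set u := x - y
  set w := F x - F y
  rw [norm_sub_sq_real u w] at hxy
  have hsq : ‖(m + 1) • w - u‖ ^ 2 ≤ (m * ‖u‖) ^ 2 := by
    rw [norm_sub_sq_real, real_inner_smul_left, norm_smul, mul_pow, Real.norm_eq_abs, sq_abs,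
      real_inner_comm]
    nlinarith [mul_le_mul_of_nonneg_left hxy (by linarith : (0:ℝ) ≤ m + 1)]
  exact pow_le_pow_iff_left₀ (norm_nonneg _) (by positivity) two_ne_zero |>.mp hsq

theorem IsAveraged.exists_lipschitzWith {m : ℝ} (hm : 0 < m) {F : E → E} (h : IsAveraged m F) :
    ∃ R : E → E, LipschitzWith 1 R ∧ ∀ x, F x = (m / (m + 1)) • R x + (1 / (m + 1)) • x := by
  refine ⟨fun x => m⁻¹ • ((m + 1) • F x - x), ?_, fun x => ?_⟩
  · refine LipschitzWith.of_dist_le_mul fun x y => ?_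
    rw [dist_eq_norm, dist_eq_norm, ← smul_sub, norm_smul, Real.norm_of_nonneg (by positivity),
      NNReal.coe_one, one_mul, sub_sub_sub_comm, ← smul_sub]
    calc m⁻¹ * ‖(m + 1) • (F x - F y) - (x - y)‖ ≤ m⁻¹ * (m * ‖x - y‖) := by
          gcongr; exact h.norm_smul_sub_le hm.le x y
      _ = ‖x - y‖ := inv_mul_cancel_left₀ hm.ne' _
  · have : m + 1 ≠ 0 := by positivity
    match_scalars
    · field_simp
    · field_simp
      ring

end Averaged

theorem PNN_tight_frame_averaged_general
    (K d : ℕ) (hK : 2 ≤ K)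
    (n : Fin (K - 1) → ℕ)
    (T : ∀ k : Fin (K - 1), EuclideanSpace ℝ (Fin d) →L[ℝ] EuclideanSpace ℝ (Fin (n k)))
    (b : ∀ k : Fin (K - 1), EuclideanSpace ℝ (Fin (n k)))
    (bK : EuclideanSpace ℝ (Fin d))
    -- `g` is proper, convex and lower semicontinuous with values in `ℝ ∪ {+∞}`:
    (g : ℝ → EReal)
    (hg_ne_bot : ∀ w : ℝ, g w ≠ ⊥) (hg_proper : ∃ w : ℝ, g w ≠ ⊤)
    (hg_convex : ∀ (w₁ w₂ : ℝ) (a c : ℝ), 0 ≤ a → 0 ≤ c → a + c = 1 →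
      g (a * w₁ + c * w₂) ≤ (a : EReal) * g w₁ + (c : EReal) * g w₂)
    -- `proxg z` is the unique minimizer over `w` of `½(z − w)² + g(w)`:
    (proxg : ℝ → ℝ)
    (hproxg : ∀ z w : ℝ,
      (((2⁻¹ * (z - proxg z) ^ 2 : ℝ) : EReal) + g (proxg z) ≤
        ((2⁻¹ * (z - w) ^ 2 : ℝ) : EReal) + g w) ∧
      (((2⁻¹ * (z - w) ^ 2 : ℝ) : EReal) + g w ≤
        ((2⁻¹ * (z - proxg z) ^ 2 : ℝ) : EReal) + g (proxg z) → w = proxg z))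
    -- the layers and the network:
    (L : Fin (K - 1) → (EuclideanSpace ℝ (Fin d) → EuclideanSpace ℝ (Fin d)))
    (hL : ∀ k x, L k x =
      (‖T k‖ ^ 2)⁻¹ • (adjoint (T k)) (WithLp.toLp 2 (fun i => proxg ((T k x + b k) i))))
    (Φ : EuclideanSpace ℝ (Fin d) → EuclideanSpace ℝ (Fin d))
    (hΦ : ∀ x, Φ x = iterComp (K - 1) L x + bK) :
    ∃ R : EuclideanSpace ℝ (Fin d) → EuclideanSpace ℝ (Fin d),
      LipschitzWith 1 R ∧
      ∀ x, Φ x = (((K : ℝ) - 1) / K) • R x + ((1 : ℝ) / K) • x := by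
  have hprox : FirmlyNonexpansive proxg :=
    firmlyNonexpansive_of_isProxPoint hg_ne_bot hg_proper hg_convex fun z w => (hproxg z w).1
  have hlayer (k : Fin (K - 1)) : IsAveraged 1 (L k) := by
    rw [funext (hL k)]
    exact ((firmlyNonexpansive_toLp_comp hprox).scaled_adjoint_comp_affine
      (T k) (b k)).isAveraged_one
  have hΦ_avg : IsAveraged ((K - 1 : ℕ) : ℝ) Φ := by
    rw [funext hΦ]
    exact (isAveraged_iterComp (by omega) L hlayer).add_const bK
  have hK_cast : ((K - 1 : ℕ) : ℝ) = K - 1 := by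
    rw [Nat.cast_sub (by omega), Nat.cast_one]
  obtain ⟨R, hR, hΦR⟩ := hΦ_avg.exists_lipschitzWith (Nat.cast_pos.mpr (by omega))
  refine ⟨R, hR, fun x => ?_⟩
  rw [hΦR, hK_cast, sub_add_cancel]

/-- Let `K ≥ 2`, `d ≥ 1`, `n_k ≥ 1`, and for `k = 1, …, K−1` let
`T_k ∈ ℝ^{n_k×d}` be nonzero with `T_kᵀT_k = ‖T_k‖²I` or `T_kT_kᵀ = ‖T_k‖²I`, let `b_k` be
bias vectors and `g : ℝ → ℝ ∪ {+∞}` proper, convex, lower semicontinuous with proximity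
operator `prox_g`. With layers `L_k(x) := ‖T_k‖⁻² T_kᵀ σ(T_k x + b_k)` (σ = componentwise
`prox_g`) and `Φ(x) := L_{K−1}(⋯L_1(x)⋯) + b_K`, the map `Φ` is `(K−1)/K`-averaged: there is
a nonexpansive `R` with `Φ = ((K−1)/K)·R + (1/K)·Id`. -/
theorem PNN_tight_frame_averaged
    (K d : ℕ) (hK : 2 ≤ K) (hd : 1 ≤ d)
    (n : Fin (K - 1) → ℕ) (hn : ∀ k, 1 ≤ n k)
    (T : ∀ k : Fin (K - 1), EuclideanSpace ℝ (Fin d) →L[ℝ] EuclideanSpace ℝ (Fin (n k)))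
    (hT_ne : ∀ k, T k ≠ 0)
    (hT_tight : ∀ k,
      adjoint (T k) ∘L T k = (‖T k‖ ^ 2 : ℝ) • ContinuousLinearMap.id ℝ (EuclideanSpace ℝ (Fin d)) ∨
      T k ∘L adjoint (T k) = (‖T k‖ ^ 2 : ℝ) • ContinuousLinearMap.id ℝ (EuclideanSpace ℝ (Fin (n k))))
    (b : ∀ k : Fin (K - 1), EuclideanSpace ℝ (Fin (n k)))
    (bK : EuclideanSpace ℝ (Fin d))
    -- `g` is proper, convex and lower semicontinuous with values in `ℝ ∪ {+∞}`:
    (g : ℝ → EReal)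
    (hg_ne_bot : ∀ w : ℝ, g w ≠ ⊥) (hg_proper : ∃ w : ℝ, g w ≠ ⊤)
    (hg_convex : ∀ (w₁ w₂ : ℝ) (a c : ℝ), 0 ≤ a → 0 ≤ c → a + c = 1 →
      g (a * w₁ + c * w₂) ≤ (a : EReal) * g w₁ + (c : EReal) * g w₂)
    (hg_lsc : LowerSemicontinuous g)
    -- `proxg z` is the unique minimizer over `w` of `½(z − w)² + g(w)`:
    (proxg : ℝ → ℝ)
    (hproxg : ∀ z w : ℝ,
      (((2⁻¹ * (z - proxg z) ^ 2 : ℝ) : EReal) + g (proxg z) ≤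
        ((2⁻¹ * (z - w) ^ 2 : ℝ) : EReal) + g w) ∧
      (((2⁻¹ * (z - w) ^ 2 : ℝ) : EReal) + g w ≤
        ((2⁻¹ * (z - proxg z) ^ 2 : ℝ) : EReal) + g (proxg z) → w = proxg z))
    -- the layers and the network:
    (L : Fin (K - 1) → (EuclideanSpace ℝ (Fin d) → EuclideanSpace ℝ (Fin d)))
    (hL : ∀ k x, L k x =
      (‖T k‖ ^ 2)⁻¹ • (adjoint (T k)) (WithLp.toLp 2 (fun i => proxg ((T k x + b k) i))))
    (Φ : EuclideanSpace ℝ (Fin d) → EuclideanSpace ℝ (Fin d))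
    (hΦ : ∀ x, Φ x = iterComp (K - 1) L x + bK) :
    ∃ R : EuclideanSpace ℝ (Fin d) → EuclideanSpace ℝ (Fin d),
      LipschitzWith 1 R ∧
      ∀ x, Φ x = (((K : ℝ) - 1) / K) • R x + ((1 : ℝ) / K) • x :=
  PNN_tight_frame_averaged_general K d hK n T b bK g hg_ne_bot hg_proper hg_convex proxg hproxg L hL
    Φ hΦ
end

section
/- Let T ∈ ℝ^{n×d} with TᵀT = I_d and X ∈ ℝ^{n×d}. For Y ∈ ℝ^{n×d} define Ŵ(Y) := Y Tᵀ − ½ T (Tᵀ Y Tᵀ) and W(Y) := Ŵ(Y) − Ŵ(Y)ᵀ, and let P_T(X) := (I_n − T Tᵀ) X + ½ T (Tᵀ X − Xᵀ T) denote the orthogonal projection of X onto the tangent space of the Stiefel manifold St(d, n) at T. Then W(X) = W(P_T(X)); consequently, whenever I_n − ½W(X) is invertible, the Cayley retraction R_T(X) := (I_n − ½W(X))⁻¹(I_n + ½W(X)) T satisfies R_T(X) = R_T(P_T(X)). -/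
/-!
The map `W` is linear, and `X - P_T(X) = T S` with `S = ½ (TᵀX + XᵀT)` symmetric.
Since `TᵀT = I`, one gets `Ŵ(T S) = ½ T S Tᵀ`, which is symmetric, so `W(T S) = 0`
and hence `W(X) = W(P_T(X))`; the Cayley retraction depends on `X` only through `W(X)`.
-/

open Matrix

namespace Matrix.Stiefel

variable {m k R : Type*} [Fintype m] [Fintype k] [Field R]

def cayleyGeneratorHalf (T Y : Matrix m k R) : Matrix m m R :=
  Y * Tᵀ - (2⁻¹ : R) • (T * (Tᵀ * Y * Tᵀ))

def cayleyGenerator (T Y : Matrix m k R) : Matrix m m R :=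
  cayleyGeneratorHalf T Y - (cayleyGeneratorHalf T Y)ᵀ

def tangentProj [DecidableEq m] (T Y : Matrix m k R) : Matrix m k R :=
  (1 - T * Tᵀ) * Y + (2⁻¹ : R) • (T * (Tᵀ * Y - Yᵀ * T))

theorem cayleyGenerator_sub (T X Y : Matrix m k R) :
    cayleyGenerator T (X - Y) = cayleyGenerator T X - cayleyGenerator T Y := by
  simp only [cayleyGenerator, cayleyGeneratorHalf, Matrix.sub_mul, Matrix.mul_sub,
    transpose_sub, smul_sub]
  abel

theorem cayleyGenerator_mul_of_isSymm [DecidableEq k] {T : Matrix m k R} (hT : Tᵀ * T = 1)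
    {S : Matrix k k R} (hS : S.IsSymm) : cayleyGenerator T (T * S) = 0 := by
  have hhalf : cayleyGeneratorHalf T (T * S) = (1 - (2⁻¹ : R)) • (T * S * Tᵀ) := by
    rw [cayleyGeneratorHalf, ← Matrix.mul_assoc Tᵀ, hT, Matrix.one_mul, sub_smul, one_smul,
      Matrix.mul_assoc]
  have hsymm : (cayleyGeneratorHalf T (T * S)).IsSymm := by
    rw [hhalf]
    refine IsSymm.smul ?_ _
    simp [IsSymm, transpose_mul, hS.eq, Matrix.mul_assoc]
  rw [cayleyGenerator, hsymm.eq, sub_self]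

theorem sub_tangentProj [DecidableEq m] [NeZero (2 : R)] (T Y : Matrix m k R) :
    Y - tangentProj T Y = T * ((2⁻¹ : R) • (Tᵀ * Y + Yᵀ * T)) := by
  simp only [tangentProj, Matrix.sub_mul, Matrix.mul_sub, Matrix.mul_add, Matrix.one_mul,
    Matrix.mul_smul, smul_sub, smul_add, Matrix.mul_assoc]
  match_scalars <;> field_simp <;> ring

theorem cayleyGenerator_tangentProj [DecidableEq m] [DecidableEq k] [NeZero (2 : R)]
    {T : Matrix m k R} (hT : Tᵀ * T = 1) (Y : Matrix m k R) :
    cayleyGenerator T (tangentProj T Y) = cayleyGenerator T Y := by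
  have hsymm : ((2⁻¹ : R) • (Tᵀ * Y + Yᵀ * T)).IsSymm := by
    have := (isSymm_add_transpose_self (Tᵀ * Y)).smul (2⁻¹ : R)
    rwa [transpose_mul, transpose_transpose] at this
  rw [eq_comm, ← sub_eq_zero, ← cayleyGenerator_sub, sub_tangentProj,
    cayleyGenerator_mul_of_isSymm hT hsymm]

end Matrix.Stiefel

open Matrix.Stiefel

/-- Let `T ∈ ℝ^{n×d}` with `TᵀT = I_d` and `X ∈ ℝ^{n×d}`. With
`Ŵ(Y) := Y Tᵀ − ½ T (Tᵀ Y Tᵀ)`, `W(Y) := Ŵ(Y) − Ŵ(Y)ᵀ`, and the tangent-space projection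
`P_T(X) := (I − T Tᵀ) X + ½ T (Tᵀ X − Xᵀ T)`, one has `W(X) = W(P_T(X))`; consequently,
whenever `I − ½W(X)` is invertible, the Cayley retraction
`R_T(X) := (I − ½W(X))⁻¹ (I + ½W(X)) T` satisfies `R_T(X) = R_T(P_T(X))`. -/
theorem cayley_retraction_eq_on_projection {n d : ℕ}
    (T : Matrix (Fin n) (Fin d) ℝ) (hT : Tᵀ * T = 1) (X : Matrix (Fin n) (Fin d) ℝ)
    (What : Matrix (Fin n) (Fin d) ℝ → Matrix (Fin n) (Fin n) ℝ)
    (hWhat : ∀ Y, What Y = Y * Tᵀ - (2⁻¹ : ℝ) • (T * (Tᵀ * Y * Tᵀ)))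
    (W : Matrix (Fin n) (Fin d) ℝ → Matrix (Fin n) (Fin n) ℝ)
    (hW : ∀ Y, W Y = What Y - (What Y)ᵀ)
    (PT : Matrix (Fin n) (Fin d) ℝ → Matrix (Fin n) (Fin d) ℝ)
    (hPT : ∀ Y, PT Y = (1 - T * Tᵀ) * Y + (2⁻¹ : ℝ) • (T * (Tᵀ * Y - Yᵀ * T))) :
    W X = W (PT X) ∧
    (IsUnit (1 - (2⁻¹ : ℝ) • W X) →
      (1 - (2⁻¹ : ℝ) • W X)⁻¹ * (1 + (2⁻¹ : ℝ) • W X) * T =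
        (1 - (2⁻¹ : ℝ) • W (PT X))⁻¹ * (1 + (2⁻¹ : ℝ) • W (PT X)) * T) := by
  obtain rfl : What = cayleyGeneratorHalf T := funext hWhat
  obtain rfl : W = cayleyGenerator T := funext hW
  obtain rfl : PT = tangentProj T := funext hPT
  have hgen : cayleyGenerator T X = cayleyGenerator T (tangentProj T X) :=
    (cayleyGenerator_tangentProj hT X).symm
  exact ⟨hgen, fun _ => by rw [hgen]⟩
end
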